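/- For every permutation α of {1,…,m} and every integer N ≥ 1, the integer Tr(Σ_{i₁,…,i_m=1}^N X_{i₁ i_{α(1)}} X_{i₂ i_{α(2)}} ⋯ X_{i_m i_{α(m)}}) (the trace of the sum of products of the integer matrices X_{ij}) is divisible by N. -/

import Mathlib

open Matrix

/-- The standard generators `X_{ij} = E_{ij} - E_{N+1-j, N+1-i}` of `so(N)`,
as `N × N` matrices over `ℤ` (indices zero-based, so `N+1-i` becomes `Fin.rev i`). -/
def soGenZ (N : ℕ) (i j : Fin N) : Matrix (Fin N) (Fin N) ℤ :=
  Matrix.single i j 1 - Matrix.single j.rev i.rev 1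

/-!
Write `M = ∑_i X_{i₁ i_{α(1)}} ⋯ X_{i_m i_{α(m)}}`. For `A ∈ so(N)` one has
`[A, X_{ij}] = ∑_c (A_{ci} X_{cj} - A_{jc} X_{ic})`, so by the Leibniz rule `[A, M]` is a sum of
words in which a single index of a single letter has been moved. Moving the first index of the
letter at position `α k` and moving the second index of the letter at position `k` change the
same summation variable `i_{α k}`, and after re-summing over it the two contributions cancel;
hence `M` commutes with `so(N)`. Commuting with `X_{pq}` forces `M_{pp} = M_{qq}` unless
`q = rev p`, and that case follows from the symmetry of `M` under `i ↦ rev ∘ i`. So the diagonal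
of `M` is constant and `tr M = N · M_{00}`.
-/

open Function

theorem List.mul_prod_ofFn_sub_prod_ofFn_mul {R : Type*} [Ring R] (A : R) :
    ∀ {m : ℕ} (f : Fin m → R), A * (List.ofFn f).prod - (List.ofFn f).prod * A =
      ∑ k, (List.ofFn (update f k (A * f k - f k * A))).prod
  | 0, f => by simp
  | m + 1, f => by
    have ih : A * (ofFn (Fin.tail f)).prod - (ofFn (Fin.tail f)).prod * A =
        ∑ k, (ofFn (update (Fin.tail f) k (A * f k.succ - f k.succ * A))).prod :=
      mul_prod_ofFn_sub_prod_ofFn_mul A (Fin.tail f)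
    have htail (g : Fin (m + 1) → R) : (fun i => g i.succ) = Fin.tail g := rfl
    simp only [List.ofFn_succ, List.prod_cons, Fin.sum_univ_succ, update_self,
      update_of_ne (Fin.succ_ne_zero _).symm, htail, Fin.tail_update_zero,
      Fin.tail_update_succ]
    rw [← Finset.mul_sum, ← ih]
    noncomm_ring

theorem Fintype.sum_sum_update_swap {ι β M : Type*} [Fintype ι] [DecidableEq ι] [Fintype β]
    [AddCommMonoid M] (G : (ι → β) → (ι → β) → M) (k : ι) :
    ∑ i, ∑ c, G (update i k c) i = ∑ i, ∑ c, G i (update i k c) := by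
  have hinv : Involutive fun p : (ι → β) × β => (update p.1 k p.2, p.1 k) := fun p => by simp
  simp only [← Fintype.sum_prod_type']
  exact Fintype.sum_bijective _ hinv.bijective _ _ fun p => by simp

theorem Matrix.natCast_card_dvd_trace_of_diag_eq {n R : Type*} [Fintype n] [Semiring R]
    {A : Matrix n n R} (h : ∀ p q, A p p = A q q) : (Fintype.card n : R) ∣ A.trace := by
  cases isEmpty_or_nonempty n with
  | inl _ => simp [Matrix.trace]
  | inr hn =>
    obtain ⟨p⟩ := hn
    exact ⟨A p p, by simp [Matrix.trace, h _ p, Finset.sum_const, nsmul_eq_mul]⟩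

section soGenZ

variable {N : ℕ}

-- The condition `A q.rev p.rev = -A p q` says that `A` lies in `so(N)`, the Lie algebra of the
-- antidiagonal symmetric form.

theorem soGenZ_rev_rev (a b p q : Fin N) :
    soGenZ N a b q.rev p.rev = -soGenZ N a b p q := by
  simp only [soGenZ, Matrix.sub_apply, single_apply, Fin.rev_rev, ← Fin.rev_eq_iff (j := q),
    ← Fin.rev_eq_iff (j := p)]
  simp only [eq_comm (a := b), eq_comm (a := a), eq_comm (a := a.rev), eq_comm (a := b.rev),
    and_comm (a := q = _)]
  abel

theorem mul_soGenZ_sub_soGenZ_mul {A : Matrix (Fin N) (Fin N) ℤ}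
    (hA : ∀ p q, A q.rev p.rev = -A p q) (i j : Fin N) :
    A * soGenZ N i j - soGenZ N i j * A = ∑ c, (A c i • soGenZ N c j - A j c • soGenZ N i c) := by
  have hrev (a b : Fin N) : a = b.rev ↔ b = a.rev := by rw [← Fin.rev_eq_iff, eq_comm]
  ext p q
  have h₁ := hA i.rev q
  have h₂ := hA p j.rev
  rw [Fin.rev_rev] at h₁ h₂
  simp only [soGenZ, Matrix.sub_apply, Matrix.sum_apply, Matrix.smul_apply, smul_eq_mul,
    Matrix.mul_apply, single_apply, mul_sub, sub_mul, Finset.sum_sub_distrib, mul_ite, ite_mul,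
    ite_and, mul_one, one_mul, zero_mul, mul_zero, Fin.rev_eq_iff, hrev i, hrev j]
  simp only [Finset.sum_ite_eq, Finset.sum_ite_eq', Finset.sum_ite_irrel, Finset.mem_univ,
    if_true, Finset.sum_const_zero, h₁, h₂]
  split_ifs <;> ring

theorem soGenZ_submatrix_rev (i j : Fin N) :
    (soGenZ N i j).submatrix Fin.rev Fin.rev = soGenZ N i.rev j.rev := by
  ext p q
  simp [soGenZ, single_apply, Fin.rev_eq_iff]

theorem diag_eq_of_commute_soGenZ {M : Matrix (Fin N) (Fin N) ℤ} {p q : Fin N}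
    (h : Commute (soGenZ N p q) M) (hpq : p ≠ q.rev) : M p p = M q q := by
  have hqp : p.rev ≠ q := by rwa [Ne, Fin.rev_eq_iff]
  have hpq_entry := congrFun (congrFun h.eq p) q
  simp [soGenZ, Matrix.mul_apply, single_apply, hpq.symm, hqp] at hpq_entry
  exact hpq_entry.symm

end soGenZ

def soWord (N : ℕ) {m : ℕ} (i j : Fin m → Fin N) : Matrix (Fin N) (Fin N) ℤ :=
  (List.ofFn fun k => soGenZ N (i k) (j k)).prod

def soContraction (N : ℕ) {m : ℕ} (α : Equiv.Perm (Fin m)) : Matrix (Fin N) (Fin N) ℤ :=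
  ∑ i : Fin m → Fin N, soWord N i (i ∘ α)

section soContraction

variable {N m : ℕ}

theorem mul_soWord_sub_soWord_mul {A : Matrix (Fin N) (Fin N) ℤ}
    (hA : ∀ p q, A q.rev p.rev = -A p q) (i j : Fin m → Fin N) :
    A * soWord N i j - soWord N i j * A =
      ∑ k, ∑ c, (A c (i k) • soWord N (update i k c) j - A (j k) c • soWord N i (update j k c)) := by
  let P := MultilinearMap.mkPiAlgebraFin ℤ m (Matrix (Fin N) (Fin N) ℤ)
  let X : Fin m → Matrix (Fin N) (Fin N) ℤ := fun k => soGenZ N (i k) (j k)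
  have hi (k c) : soWord N (update i k c) j = P (update X k (soGenZ N c (j k))) := by
    rw [MultilinearMap.mkPiAlgebraFin_apply, soWord]
    congr; funext l; exact apply_update (fun l x => soGenZ N x (j l)) i k c l
  have hj (k c) : soWord N i (update j k c) = P (update X k (soGenZ N (i k) c)) := by
    rw [MultilinearMap.mkPiAlgebraFin_apply, soWord]
    congr; funext l; exact apply_update (fun l x => soGenZ N (i l) x) j k c l
  rw [soWord, List.mul_prod_ofFn_sub_prod_ofFn_mul]
  refine Finset.sum_congr rfl fun k _ => ?_
  rw [mul_soGenZ_sub_soGenZ_mul hA, ← MultilinearMap.mkPiAlgebraFin_apply (R := ℤ),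
    MultilinearMap.map_update_sum]
  refine Finset.sum_congr rfl fun c _ => ?_
  rw [MultilinearMap.map_update_sub, MultilinearMap.map_update_smul,
    MultilinearMap.map_update_smul, hi, hj]

theorem soWord_submatrix_rev (i j : Fin m → Fin N) :
    (soWord N i j).submatrix Fin.rev Fin.rev = soWord N (Fin.rev ∘ i) (Fin.rev ∘ j) := by
  have h := map_list_prod (reindexRingEquiv ℤ (Fin.revPerm (n := N)))
    (List.ofFn fun k => soGenZ N (i k) (j k))
  simpa [soWord, List.map_ofFn, Function.comp_def, Fin.revPerm, Involutive.coe_toPerm,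
    soGenZ_submatrix_rev] using h

theorem commute_soContraction (α : Equiv.Perm (Fin m)) {A : Matrix (Fin N) (Fin N) ℤ}
    (hA : ∀ p q, A q.rev p.rev = -A p q) : Commute A (soContraction N α) := by
  rw [Commute, SemiconjBy, ← sub_eq_zero, soContraction, Finset.mul_sum, Finset.sum_mul,
    ← Finset.sum_sub_distrib]
  simp only [mul_soWord_sub_soWord_mul hA]
  rw [Finset.sum_comm]
  simp only [Finset.sum_sub_distrib, sub_eq_zero]
  rw [← Equiv.sum_comp α]
  refine Finset.sum_congr rfl fun k _ => ?_
  -- Both sides re-sum over the variable `i (α k)` that the moved index belongs to.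
  convert Fintype.sum_sum_update_swap
    (fun i' i => A (i' (α k)) (i (α k)) • soWord N i' (i ∘ α)) (α k) using 4
  all_goals simp [update_comp_equiv]

theorem soContraction_submatrix_rev (α : Equiv.Perm (Fin m)) :
    (soContraction N α).submatrix Fin.rev Fin.rev = soContraction N α := by
  have hinv : Involutive fun i : Fin m → Fin N => Fin.rev ∘ i := fun i => by
    funext k; simp
  have hsum (f : (Fin m → Fin N) → Matrix (Fin N) (Fin N) ℤ) :
      (∑ i, f i).submatrix Fin.rev Fin.rev = ∑ i, (f i).submatrix Fin.rev Fin.rev := by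
    ext; simp [Matrix.sum_apply]
  rw [soContraction, hsum]
  exact Fintype.sum_bijective _ hinv.bijective _ _ fun i => soWord_submatrix_rev i (i ∘ α)

theorem soContraction_diag_eq (α : Equiv.Perm (Fin m)) (p q : Fin N) :
    soContraction N α p p = soContraction N α q q := by
  by_cases hpq : p = q.rev
  · conv_lhs => rw [hpq, ← soContraction_submatrix_rev]
    simp
  · exact diag_eq_of_commute_soGenZ (commute_soContraction α (soGenZ_rev_rev p q)) hpq

end soContraction

theorem dvd_soTrace_general (N m : ℕ) (α : Equiv.Perm (Fin m)) :
    (N : ℤ) ∣ Matrix.trace (∑ i : Fin m → Fin N,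
      ((List.finRange m).map fun k => soGenZ N (i k) (i (α k))).prod) := by
  simpa [soContraction, soWord, List.ofFn_eq_map] using
    natCast_card_dvd_trace_of_diag_eq (soContraction_diag_eq (N := N) α)

/-- For any permutation `α` of `{1,…,m}` and `N ≥ 1`, the integer
`Tr (Σ_{i₁,…,i_m} X_{i₁ i_{α(1)}} ⋯ X_{i_m i_{α(m)}})` is divisible by `N`:
the standard-representation so(N) weight of `α` divided by `N` is an integer. -/
theorem dvd_soTrace (N m : ℕ) (hN : 1 ≤ N) (α : Equiv.Perm (Fin m)) :
    (N : ℤ) ∣ Matrix.trace (∑ i : Fin m → Fin N,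
      ((List.finRange m).map fun k => soGenZ N (i k) (i (α k))).prod) :=
  dvd_soTrace_general N m α
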